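/- arXiv:2003.10657 — 2 statements merged into one kernel-verified Lean document; each statement's English description precedes it below -/
import Mathlib

section
/- Let V be a vector space with a monotone family of seminorms N(t,·) on (0,T), let u : (0,T) → V, and let ψ' ∈ L^p((0,T)) be nonnegative. Suppose that for every v ∈ V and all s ≤ t one has |N(t, u(t) − v) − N(s, u(s) − v)| ≤ ∫_s^t ψ'(τ) dτ. Suppose moreover that for given t₀ ≤ t there is a sequence v_k ∈ V with N(t₀, u(t₀) − v_k) → 0. Then N(t, u(t) − u(t₀)) ≤ ∫_{t₀}^t ψ'(τ) dτ. -/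
open Set MeasureTheory Filter intervalIntegral ENNReal

/-- Let `N t` be a monotone family of seminorms on `V` over `(0,T)`,
`u : (0,T) → V`, and `ψ' ∈ L^p((0,T))` nonnegative with
`|N t (u t − v) − N s (u s − v)| ≤ ∫_s^t ψ'` for every `v ∈ V` and all `s ≤ t`.
If for given `t₀ ≤ t` there is a sequence `v_k ∈ V` with `N t₀ (u t₀ − v_k) → 0`,
then `N t (u t − u t₀) ≤ ∫_{t₀}^t ψ'`. -/
theorem stmt14 {V : Type*} [AddCommGroup V] [Module ℝ V]
    (T : ℝ) (hT : 0 < T) (N : ℝ → Seminorm ℝ V)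
    (hmono : ∀ v : V, ∀ t₁ t₂ : ℝ, t₁ ∈ Set.Ioo 0 T → t₂ ∈ Set.Ioo 0 T → t₁ ≤ t₂ →
      N t₂ v ≤ N t₁ v)
    (p : ℝ≥0∞) (hp : 1 ≤ p) (u : ℝ → V) (ψ' : ℝ → ℝ)
    (hψ : MemLp ψ' p (volume.restrict (Set.Ioo 0 T))) (hψ0 : ∀ t, 0 ≤ ψ' t)
    (hA : ∀ v : V, ∀ s ∈ Set.Ioo 0 T, ∀ t ∈ Set.Ioo 0 T, s ≤ t →
      |N t (u t - v) - N s (u s - v)| ≤ ∫ τ in s..t, ψ' τ)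
    (t₀ t : ℝ) (ht₀ : t₀ ∈ Set.Ioo 0 T) (ht : t ∈ Set.Ioo 0 T) (hle : t₀ ≤ t)
    (vk : ℕ → V)
    (hvk : Tendsto (fun k => N t₀ (u t₀ - vk k)) atTop (nhds 0)) :
    N t (u t - u t₀) ≤ ∫ τ in t₀..t, ψ' τ := by
  have key : ∀ k, N t (u t - u t₀) ≤ 2 * N t₀ (u t₀ - vk k) + ∫ τ in t₀..t, ψ' τ := by
    intro k
    have h1 : N t (u t - u t₀) ≤ N t (u t - vk k) + N t (vk k - u t₀) := by
      have := map_add_le_add (N t) (u t - vk k) (vk k - u t₀)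
      simpa using this
    have h2 : N t (vk k - u t₀) ≤ N t₀ (u t₀ - vk k) := by
      have := hmono (vk k - u t₀) t₀ t ht₀ ht hle
      calc N t (vk k - u t₀) ≤ N t₀ (vk k - u t₀) := this
        _ = N t₀ (u t₀ - vk k) := by rw [← map_neg_eq_map]; congr 1; abel
    have h3 : N t (u t - vk k) ≤ N t₀ (u t₀ - vk k) + ∫ τ in t₀..t, ψ' τ := by
      have := hA (vk k) t₀ ht₀ t ht hle
      have := abs_le.mp this
      linarith [this.2]
    linarith
  have hlim : Tendsto (fun k => 2 * N t₀ (u t₀ - vk k) + ∫ τ in t₀..t, ψ' τ)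
      atTop (nhds (2 * 0 + ∫ τ in t₀..t, ψ' τ)) := by
    exact ((hvk.const_mul 2).add tendsto_const_nhds)
  have := ge_of_tendsto hlim (Eventually.of_forall key)
  simpa using this
end

section
/- Let X be a Banach space whose dual is separable (e.g. X reflexive and separable), 1 ≤ p ≤ ∞, and u, v ∈ L^p((0,T); X). Suppose there is a countable set E' ⊂ X', dense in X', such that for every x' ∈ E' the scalar function ψ(t) = ⟨x', u(t)⟩ is locally absolutely continuous on (0,T) with ψ'(t) = ⟨x', v(t)⟩ for a.e. t. Then v is the weak derivative of u: ∫₀ᵀ φ'(t) u(t) dt = −∫₀ᵀ φ(t) v(t) dt for all φ ∈ C₀^∞((0,T)). -/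
open Set MeasureTheory Filter intervalIntegral ENNReal

/-- Absolute continuity of a real-valued function on `[a,b]`. -/
def AbsolutelyContinuousOnReal (f : ℝ → ℝ) (a b : ℝ) : Prop :=
  ∀ ε > 0, ∃ δ > 0, ∀ (n : ℕ) (c d : Fin n → ℝ),
    (∀ i, a ≤ c i ∧ c i ≤ d i ∧ d i ≤ b) →
    (Pairwise fun i j => Disjoint (Set.Ioo (c i) (d i)) (Set.Ioo (c j) (d j))) →
    (∑ i, (d i - c i)) ≤ δ →
    (∑ i, |f (d i) - f (c i)|) ≤ ε

open scoped Topology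

namespace ACAux

lemma continuousOn {F : ℝ → ℝ} {a b : ℝ} (h : AbsolutelyContinuousOnReal F a b) :
    ContinuousOn F (Icc a b) := by
  intro x hx
  rw [Metric.continuousWithinAt_iff]
  intro ε hε
  obtain ⟨δ, hδ, H⟩ := h (ε / 2) (by linarith)
  refine ⟨δ, hδ, fun {y} hy hxy => ?_⟩
  have key := H 1 (fun _ => min y x) (fun _ => max y x)
    (fun _ => ⟨le_min hy.1 hx.1, min_le_max, max_le hy.2 hx.2⟩)
    (Subsingleton.pairwise)
    (by
      rw [Fin.sum_univ_one, max_sub_min_eq_abs]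
      rw [Real.dist_eq] at hxy
      rw [abs_sub_comm]
      exact hxy.le)
  rw [Fin.sum_univ_one] at key
  have : |F y - F x| ≤ ε / 2 := by
    rcases le_total y x with hyx | hyx
    · rw [min_eq_left hyx, max_eq_right hyx] at key
      rw [abs_sub_comm]; exact key
    · rw [min_eq_right hyx, max_eq_left hyx] at key
      exact key
  rw [Real.dist_eq]
  linarith

lemma sub {F G : ℝ → ℝ} {a b : ℝ} (hF : AbsolutelyContinuousOnReal F a b)
    (hG : AbsolutelyContinuousOnReal G a b) :
    AbsolutelyContinuousOnReal (fun t => F t - G t) a b := by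
  intro ε hε
  obtain ⟨δ₁, hδ₁, H₁⟩ := hF (ε / 2) (by linarith)
  obtain ⟨δ₂, hδ₂, H₂⟩ := hG (ε / 2) (by linarith)
  refine ⟨min δ₁ δ₂, lt_min hδ₁ hδ₂, fun n c d h1 h2 h3 => ?_⟩
  have B1 := H₁ n c d h1 h2 (h3.trans (min_le_left _ _))
  have B2 := H₂ n c d h1 h2 (h3.trans (min_le_right _ _))
  calc ∑ i, |F (d i) - G (d i) - (F (c i) - G (c i))|
      ≤ ∑ i, (|F (d i) - F (c i)| + |G (d i) - G (c i)|) := by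
        refine Finset.sum_le_sum fun i _ => ?_
        have e : F (d i) - G (d i) - (F (c i) - G (c i))
            = (F (d i) - F (c i)) - (G (d i) - G (c i)) := by ring
        rw [e]
        exact abs_sub _ _
    _ = (∑ i, |F (d i) - F (c i)|) + ∑ i, |G (d i) - G (c i)| := Finset.sum_add_distrib
    _ ≤ ε / 2 + ε / 2 := add_le_add B1 B2
    _ = ε := by ring

lemma mul {φ ψ : ℝ → ℝ} {a b : ℝ} (hψ : AbsolutelyContinuousOnReal ψ a b)
    (M L : ℝ) (hM : ∀ x, |φ x| ≤ M) (hLip : ∀ x y, |φ x - φ y| ≤ L * |x - y|) :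
    AbsolutelyContinuousOnReal (fun t => φ t * ψ t) a b := by
  have hM0 : 0 ≤ M := le_trans (abs_nonneg _) (hM a)
  have hL0 : 0 ≤ L := by
    have := hLip (a + 1) a
    simp only [add_sub_cancel_left, abs_one, mul_one] at this
    exact le_trans (abs_nonneg _) this
  obtain ⟨C, hC⟩ : ∃ C, ∀ x ∈ Icc a b, |ψ x| ≤ C := by
    rcases le_or_gt a b with hab | hab
    · obtain ⟨C, hC⟩ := isCompact_Icc.exists_bound_of_continuousOn (continuousOn hψ)
      exact ⟨C, fun x hx => hC x hx⟩
    · exact ⟨0, fun x hx => absurd (hx.1.trans hx.2) (not_le.2 hab)⟩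
  intro ε hε
  obtain ⟨δ₁, hδ₁, H₁⟩ := hψ (ε / (2 * (M + 1))) (by positivity)
  refine ⟨min δ₁ (ε / (2 * (|C| + 1) * (L + 1))), lt_min hδ₁ (by positivity),
    fun n c d h1 h2 h3 => ?_⟩
  have hCd : ∀ i, |ψ (c i)| ≤ |C| := by
    intro i
    have hci : c i ∈ Icc a b := ⟨(h1 i).1, (h1 i).2.1.trans (h1 i).2.2⟩
    exact le_trans (hC _ hci) (le_abs_self C)
  have B1 := H₁ n c d h1 h2 (h3.trans (min_le_left _ _))
  have hsum : (∑ i, (d i - c i)) ≤ ε / (2 * (|C| + 1) * (L + 1)) :=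
    h3.trans (min_le_right _ _)
  calc ∑ i, |φ (d i) * ψ (d i) - φ (c i) * ψ (c i)|
      ≤ ∑ i, (M * |ψ (d i) - ψ (c i)| + (|C| * L) * (d i - c i)) := by
        refine Finset.sum_le_sum fun i _ => ?_
        have e : φ (d i) * ψ (d i) - φ (c i) * ψ (c i)
            = φ (d i) * (ψ (d i) - ψ (c i)) + ψ (c i) * (φ (d i) - φ (c i)) := by ring
        rw [e]
        refine le_trans (abs_add_le _ _) (add_le_add ?_ ?_)
        · rw [abs_mul]
          exact mul_le_mul (hM _) le_rfl (abs_nonneg _) hM0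
        · rw [abs_mul]
          have h2' : |φ (d i) - φ (c i)| ≤ L * (d i - c i) := by
            have := hLip (d i) (c i)
            rwa [abs_of_nonneg (sub_nonneg.2 (h1 i).2.1)] at this
          calc |ψ (c i)| * |φ (d i) - φ (c i)| ≤ |C| * (L * (d i - c i)) :=
                mul_le_mul (hCd i) h2' (abs_nonneg _) (abs_nonneg _)
            _ = (|C| * L) * (d i - c i) := by ring
    _ = M * (∑ i, |ψ (d i) - ψ (c i)|) + (|C| * L) * (∑ i, (d i - c i)) := by
        rw [Finset.sum_add_distrib, Finset.mul_sum, Finset.mul_sum]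
    _ ≤ M * (ε / (2 * (M + 1))) + (|C| * L) * (ε / (2 * (|C| + 1) * (L + 1))) := by
        refine add_le_add (mul_le_mul_of_nonneg_left B1 hM0)
          (mul_le_mul_of_nonneg_left hsum (by positivity))
    _ ≤ ε / 2 + ε / 2 := by
        refine add_le_add ?_ ?_
        · have h1' : M / (M + 1) ≤ 1 := (div_le_one (by positivity)).2 (by linarith)
          calc M * (ε / (2 * (M + 1))) = (M / (M + 1)) * (ε / 2) := by
                field_simp
            _ ≤ 1 * (ε / 2) := mul_le_mul_of_nonneg_right h1' (by positivity)
            _ = ε / 2 := one_mul _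
        · have h1' : (|C| * L) / ((|C| + 1) * (L + 1)) ≤ 1 := by
            refine (div_le_one (by positivity)).2 ?_
            nlinarith [abs_nonneg C, hL0]
          calc (|C| * L) * (ε / (2 * (|C| + 1) * (L + 1)))
              = ((|C| * L) / ((|C| + 1) * (L + 1))) * (ε / 2) := by
                field_simp
            _ ≤ 1 * (ε / 2) := mul_le_mul_of_nonneg_right h1' (by positivity)
            _ = ε / 2 := one_mul _
    _ = ε := by ring

end ACAux

lemma disjoint_Ioc_of_disjoint_Ioo {c₁ d₁ c₂ d₂ : ℝ} (h₁ : c₁ ≤ d₁) (h₂ : c₂ ≤ d₂)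
    (h : Disjoint (Ioo c₁ d₁) (Ioo c₂ d₂)) : Disjoint (Ioc c₁ d₁) (Ioc c₂ d₂) := by
  rw [Set.disjoint_left]
  intro x hx1 hx2
  obtain ⟨t, ht1, ht2⟩ := exists_between (show max c₁ c₂ < x from max_lt hx1.1 hx2.1)
  exact (Set.disjoint_left.1 h)
    ⟨(le_max_left c₁ c₂).trans_lt ht1, ht2.trans_le hx1.2⟩
    ⟨(le_max_right c₁ c₂).trans_lt ht1, ht2.trans_le hx2.2⟩

lemma primitive_ac {h : ℝ → ℝ} (hh : Integrable h (volume : Measure ℝ)) (t₀ a b : ℝ) :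
    AbsolutelyContinuousOnReal (fun t => ∫ s in t₀..t, h s) a b := by
  intro ε hε
  obtain ⟨δ, hδ, H⟩ := (memLp_one_iff_integrable.2 hh).eLpNorm_indicator_le le_rfl
    ENNReal.one_ne_top hε
  refine ⟨δ, hδ, fun n c d h1 h2 h3 => ?_⟩
  set U : Set ℝ := ⋃ i ∈ (Finset.univ : Finset (Fin n)), Ioc (c i) (d i) with hU
  have hUmeas : MeasurableSet U :=
    MeasurableSet.biUnion (Finset.countable_toSet _) fun i _ => measurableSet_Ioc
  have hUvol : volume U ≤ ENNReal.ofReal δ := by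
    refine le_trans (measure_biUnion_finset_le _ _) ?_
    calc (∑ i, volume (Ioc (c i) (d i)))
        = ∑ i, ENNReal.ofReal (d i - c i) :=
          Finset.sum_congr rfl fun i _ => by rw [Real.volume_Ioc]
      _ = ENNReal.ofReal (∑ i, (d i - c i)) := by
          rw [ENNReal.ofReal_sum_of_nonneg fun i _ => sub_nonneg.2 (h1 i).2.1]
      _ ≤ ENNReal.ofReal δ := ENNReal.ofReal_le_ofReal h3
  have key := H U hUmeas hUvol
  have hE : eLpNorm (U.indicator h) 1 volume = ∫⁻ x in U, ‖h x‖₊ ∂volume := by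
    rw [eLpNorm_one_eq_lintegral_enorm, ← lintegral_indicator hUmeas]
    congr 1
    ext x
    by_cases hx : x ∈ U <;> simp [hx] <;> rfl
  rw [hE] at key
  have hdisjIoc : Set.PairwiseDisjoint ((Finset.univ : Finset (Fin n)) : Set (Fin n))
      (fun i => Ioc (c i) (d i)) := fun i _ j _ hij =>
    disjoint_Ioc_of_disjoint_Ioo (h1 i).2.1 (h1 j).2.1 (h2 hij)
  have hsplit : ∫⁻ x in U, ‖h x‖₊ ∂volume = ∑ i, ∫⁻ x in Ioc (c i) (d i), ‖h x‖₊ ∂volume :=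
    lintegral_biUnion_finset hdisjIoc (fun i _ => measurableSet_Ioc) _
  have hfin : ∀ i ∈ (Finset.univ : Finset (Fin n)),
      (∫⁻ x in Ioc (c i) (d i), ‖h x‖₊ ∂volume) ≠ ⊤ := fun i _ =>
    ne_of_lt (lt_of_le_of_lt (MeasureTheory.setLIntegral_le_lintegral _ _) hh.2)
  have step1 : ∀ i : Fin n, |(∫ s in t₀..(d i), h s) - ∫ s in t₀..(c i), h s|
      ≤ (∫⁻ x in Ioc (c i) (d i), ‖h x‖₊ ∂volume).toReal := by
    intro i
    rw [intervalIntegral.integral_interval_sub_left (hh.intervalIntegrable)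
      (hh.intervalIntegrable)]
    have b1 : |∫ s in (c i)..(d i), h s| ≤ ∫ s in (c i)..(d i), |h s| := by
      have := intervalIntegral.norm_integral_le_integral_norm (f := h) (μ := volume) (h1 i).2.1
      simpa [Real.norm_eq_abs] using this
    refine b1.trans ?_
    rw [intervalIntegral.integral_of_le (h1 i).2.1]
    have : ∫ s in Ioc (c i) (d i), |h s| ∂volume
        = (∫⁻ x in Ioc (c i) (d i), ‖h x‖₊ ∂volume).toReal := by
      rw [show (∫⁻ x in Ioc (c i) (d i), (‖h x‖₊ : ℝ≥0∞) ∂volume)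
          = ∫⁻ x in Ioc (c i) (d i), ‖h x‖ₑ ∂volume from rfl,
        ← MeasureTheory.integral_norm_eq_lintegral_enorm
        (hh.aestronglyMeasurable.restrict)]
      simp [Real.norm_eq_abs]
    rw [← this]
  calc (∑ i, |(fun t => ∫ s in t₀..t, h s) (d i) - (fun t => ∫ s in t₀..t, h s) (c i)|)
      ≤ ∑ i, (∫⁻ x in Ioc (c i) (d i), ‖h x‖₊ ∂volume).toReal :=
        Finset.sum_le_sum fun i _ => step1 i
    _ = (∑ i, ∫⁻ x in Ioc (c i) (d i), ‖h x‖₊ ∂volume).toReal :=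
        (ENNReal.toReal_sum hfin).symm
    _ = (∫⁻ x in U, ‖h x‖₊ ∂volume).toReal := by rw [hsplit]
    _ ≤ (ENNReal.ofReal ε).toReal := ENNReal.toReal_mono ENNReal.ofReal_ne_top key
    _ = ε := ENNReal.toReal_ofReal hε.le

lemma slope_sub_bound {h : ℝ → ℝ} (hh : Integrable h (volume : Measure ℝ)) (t₀ : ℝ)
    {x y : ℝ} (hxy : x < y) (w : ℝ) :
    |((∫ s in t₀..y, h s) - ∫ s in t₀..x, h s) - (y - x) * w|
      ≤ ∫ s in Ioc x y, |h s - w| ∂volume := by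
  rw [intervalIntegral.integral_interval_sub_left hh.intervalIntegrable hh.intervalIntegrable]
  have e1 : (y - x) * w = ∫ s in x..y, w := by
    rw [intervalIntegral.integral_const, smul_eq_mul]
  rw [e1, ← intervalIntegral.integral_sub hh.intervalIntegrable
    (intervalIntegrable_const)]
  calc |∫ s in x..y, (h s - w)| ≤ ∫ s in x..y, |h s - w| := by
        simpa [Real.norm_eq_abs] using intervalIntegral.norm_integral_le_integral_norm
          (f := fun s => h s - w) (μ := volume) hxy.le
    _ = ∫ s in Ioc x y, |h s - w| ∂volume := intervalIntegral.integral_of_le hxy.le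

lemma ae_hasDerivAt_primitive {h : ℝ → ℝ} (hh : Integrable h (volume : Measure ℝ)) (t₀ : ℝ) :
    ∀ᵐ x ∂(volume : Measure ℝ), HasDerivAt (fun t => ∫ s in t₀..t, h s) (h x) x := by
  filter_upwards [(IsUnifLocDoublingMeasure.vitaliFamily (volume : Measure ℝ)
    1).ae_tendsto_average_norm_sub hh.locallyIntegrable] with x hx
  set G := fun t => ∫ s in t₀..t, h s with hG
  have hR : Tendsto (fun y => ⨍ s in Icc x y, ‖h s - h x‖ ∂volume) (𝓝[>] x) (𝓝 0) :=
    hx.comp (Real.tendsto_Icc_vitaliFamily_right x)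
  have hL : Tendsto (fun y => ⨍ s in Icc y x, ‖h s - h x‖ ∂volume) (𝓝[<] x) (𝓝 0) :=
    hx.comp (Real.tendsto_Icc_vitaliFamily_left x)
  -- integral over Ioc equals length * average
  have avg_eq : ∀ {c d : ℝ}, c < d → ∫ s in Ioc c d, |h s - h x| ∂volume
      = (d - c) * ⨍ s in Icc c d, ‖h s - h x‖ ∂volume := by
    intro c d hcd
    have hvol : (volume (Icc c d)).toReal = d - c := by
      rw [Real.volume_Icc, ENNReal.toReal_ofReal (by linarith)]
    rw [setAverage_eq, smul_eq_mul, ← mul_assoc, measureReal_def, hvol]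
    rw [mul_inv_cancel₀ (by linarith : d - c ≠ 0), one_mul]
    rw [← MeasureTheory.integral_Icc_eq_integral_Ioc]
    simp [Real.norm_eq_abs]
  have right : HasDerivWithinAt G (h x) (Ici x) x := by
    rw [hasDerivWithinAt_iff_tendsto_slope]
    have hset : Ici x \ {x} = Ioi x := by
      ext t; simp [mem_diff, lt_iff_le_and_ne, eq_comm, and_comm]
    rw [hset]
    rw [tendsto_iff_dist_tendsto_zero]
    refine squeeze_zero' (eventually_nhdsWithin_of_forall fun y hy => dist_nonneg) ?_ hR
    refine eventually_nhdsWithin_of_forall fun y (hy : x < y) => ?_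
    have hb := slope_sub_bound hh t₀ hy (h x)
    rw [avg_eq hy] at hb
    have hslope : slope G x y = (G y - G x) / (y - x) := slope_def_field G x y
    rw [Real.dist_eq, hslope]
    have hyx : (0:ℝ) < y - x := by linarith
    rw [div_sub' (by linarith : y - x ≠ 0), abs_div, abs_of_pos hyx,
      div_le_iff₀ hyx]
    calc |G y - G x - (y - x) * h x|
        ≤ (y - x) * ⨍ s in Icc x y, ‖h s - h x‖ ∂volume := hb
      _ = (⨍ s in Icc x y, ‖h s - h x‖ ∂volume) * (y - x) := by ring
  have left : HasDerivWithinAt G (h x) (Iic x) x := by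
    rw [hasDerivWithinAt_iff_tendsto_slope]
    have hset : Iic x \ {x} = Iio x := by
      ext t; simp [mem_diff, lt_iff_le_and_ne, and_comm]
    rw [hset]
    rw [tendsto_iff_dist_tendsto_zero]
    refine squeeze_zero' (eventually_nhdsWithin_of_forall fun y hy => dist_nonneg) ?_ hL
    refine eventually_nhdsWithin_of_forall fun y (hy : y < x) => ?_
    have hb := slope_sub_bound hh t₀ hy (h x)
    rw [avg_eq hy] at hb
    have hslope : slope G x y = (G y - G x) / (y - x) := slope_def_field G x y
    rw [Real.dist_eq, hslope]
    have hyx : (0:ℝ) < x - y := by linarith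
    rw [div_sub' (by linarith : y - x ≠ 0), abs_div, abs_of_neg (by linarith : y - x < 0),
      show -(y - x) = x - y by ring, div_le_iff₀ hyx]
    calc |G y - G x - (y - x) * h x|
        = |(G x - G y) - (x - y) * h x| := by rw [← abs_neg]; ring_nf
      _ ≤ (x - y) * ⨍ s in Icc y x, ‖h s - h x‖ ∂volume := hb
      _ = (⨍ s in Icc y x, ‖h s - h x‖ ∂volume) * (x - y) := by ring
  have := left.union right
  rw [Set.Iic_union_Ici, hasDerivWithinAt_univ] at this
  exact this

lemma image_null_of_deriv_zero {D : ℝ → ℝ} {s : Set ℝ} (hs : MeasurableSet s)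
    (hD : ∀ x ∈ s, HasDerivAt D 0 x) : volume (D '' s) = 0 := by
  have hle := MeasureTheory.addHaar_image_le_lintegral_abs_det_fderiv
    (volume : Measure ℝ) hs (f := D) (f' := fun _ => (0 : ℝ →L[ℝ] ℝ))
    (fun x hx => by
      have h1 : HasFDerivAt D (ContinuousLinearMap.smulRight (1 : ℝ →L[ℝ] ℝ) (0:ℝ)) x :=
        (hD x hx).hasFDerivAt
      have h2 : (ContinuousLinearMap.smulRight (1 : ℝ →L[ℝ] ℝ) (0:ℝ)) = 0 := by
        ext z; simp
      rw [h2] at h1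
      exact h1.hasFDerivWithinAt)
  have hdet : ((0 : ℝ →L[ℝ] ℝ)).det = 0 := by
    have : ((0 : ℝ →L[ℝ] ℝ) : ℝ →ₗ[ℝ] ℝ) = 0 := rfl
    rw [ContinuousLinearMap.det, this, LinearMap.det_zero, Module.finrank_self, pow_one]
  simp only [hdet] at hle
  simpa using hle

lemma open_conn_eq_Ioo {C : Set ℝ} {a b : ℝ} (hCopen : IsOpen C) (hconn : IsPreconnected C)
    (hne : C.Nonempty) (hsub : C ⊆ Ioo a b) : C = Ioo (sInf C) (sSup C) := by
  have hbdd_b : BddBelow C := (bddBelow_Ioo (a := b) (b := a)).mono hsub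
  have hbdd_a : BddAbove C := (bddAbove_Ioo (a := a) (b := b)).mono hsub
  apply Subset.antisymm
  · intro x hx
    constructor
    · rcases (csInf_le hbdd_b hx).lt_or_eq with h | h
      · exact h
      · exfalso
        obtain ⟨ε, hε, hball⟩ := Metric.isOpen_iff.1 hCopen x hx
        have hmem : x - ε / 2 ∈ C := hball (by
          rw [Metric.mem_ball, Real.dist_eq,
            abs_of_neg (by linarith : x - ε/2 - x < 0)]
          linarith)
        have := csInf_le hbdd_b hmem
        rw [← h] at this
        linarith
    · rcases (le_csSup hbdd_a hx).lt_or_eq with h | h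
      · exact h
      · exfalso
        obtain ⟨ε, hε, hball⟩ := Metric.isOpen_iff.1 hCopen x hx
        have hmem : x + ε / 2 ∈ C := hball (by
          rw [Metric.mem_ball, Real.dist_eq, abs_of_pos (by linarith : (0:ℝ) < x + ε/2 - x)]
          linarith)
        have := le_csSup hbdd_a hmem
        rw [h] at this
        linarith
  · intro t ht
    obtain ⟨p, hp, hpt⟩ := exists_lt_of_csInf_lt hne ht.1
    obtain ⟨q, hq, htq⟩ := exists_lt_of_lt_csSup hne ht.2
    exact (hconn.ordConnected).out hp hq ⟨hpt.le, htq.le⟩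

lemma luzinN {F : ℝ → ℝ} {a b : ℝ} (hF : AbsolutelyContinuousOnReal F a b)
    {N : Set ℝ} (hN : N ⊆ Ioo a b) (hN0 : volume N = 0) : volume (F '' N) = 0 := by
  classical
  have hFc : ContinuousOn F (Icc a b) := ACAux.continuousOn hF
  have key : ∀ ε : ℝ, 0 < ε → volume (F '' N) ≤ ENNReal.ofReal ε := by
    intro ε hε
    obtain ⟨δ, hδ, HAC⟩ := hF ε hε
    obtain ⟨U₀, hU₀N, hU₀open, hU₀μ⟩ := Set.exists_isOpen_lt_of_lt N (ENNReal.ofReal δ)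
      (by rw [hN0]; exact ENNReal.ofReal_pos.2 hδ)
    set U : Set ℝ := U₀ ∩ Ioo a b with hUdef
    have hUopen : IsOpen U := hU₀open.inter isOpen_Ioo
    have hNU : N ⊆ U := subset_inter hU₀N hN
    have hUμ : volume U ≤ ENNReal.ofReal δ :=
      le_trans (measure_mono inter_subset_left) hU₀μ.le
    have hUsub : U ⊆ Ioo a b := inter_subset_right
    set 𝒞 : Set (Set ℝ) := (fun x => connectedComponentIn U x) '' U with h𝒞
    have hCopen : ∀ C ∈ 𝒞, IsOpen C := by
      rintro C ⟨x, hx, rfl⟩; exact hUopen.connectedComponentIn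
    have hCsub : ∀ C ∈ 𝒞, C ⊆ U := by
      rintro C ⟨x, hx, rfl⟩; exact connectedComponentIn_subset _ _
    have hCconn : ∀ C ∈ 𝒞, IsPreconnected C := by
      rintro C ⟨x, hx, rfl⟩; exact isPreconnected_connectedComponentIn
    have hCne : ∀ C ∈ 𝒞, C.Nonempty := by
      rintro C ⟨x, hx, rfl⟩; exact ⟨x, mem_connectedComponentIn hx⟩
    have hCdisj : ∀ C₁ ∈ 𝒞, ∀ C₂ ∈ 𝒞, C₁ ≠ C₂ → Disjoint C₁ C₂ := by
      rintro C₁ ⟨x, hx, rfl⟩ C₂ ⟨y, hy, rfl⟩ hne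
      rw [Set.disjoint_left]
      intro z hz1 hz2
      exact hne ((connectedComponentIn_eq hz1).trans (connectedComponentIn_eq hz2).symm)
    have hcount : 𝒞.Countable := by
      have hsub : 𝒞 ⊆ Set.range (fun q : ℚ => connectedComponentIn U (q : ℝ)) := by
        rintro C ⟨x, hx, rfl⟩
        have hCo : IsOpen (connectedComponentIn U x) := hUopen.connectedComponentIn
        obtain ⟨z, hz⟩ : (connectedComponentIn U x).Nonempty :=
          ⟨x, mem_connectedComponentIn hx⟩
        obtain ⟨ε', hε', hball⟩ := Metric.isOpen_iff.1 hCo z hz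
        obtain ⟨q, hq1, hq2⟩ := exists_rat_btwn (show z - ε' < z by linarith)
        have hqC : (q : ℝ) ∈ connectedComponentIn U x := hball (by
          rw [Metric.mem_ball, Real.dist_eq, abs_of_neg (by linarith : (q:ℝ) - z < 0)]
          linarith)
        exact ⟨q, (connectedComponentIn_eq hqC).symm⟩
      exact (Set.countable_range _).mono hsub
    -- data for each component
    have hdata : ∀ C ∈ 𝒞, ∃ m M : ℝ, a ≤ m ∧ m ≤ M ∧ M ≤ b ∧ Ioo m M ⊆ C ∧
        M - m ≤ (volume C).toReal ∧ volume (F '' C) ≤ ENNReal.ofReal |F M - F m| := by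
      intro C hC
      obtain ⟨z, hz⟩ := hCne C hC
      have hCsub' : C ⊆ Ioo a b := (hCsub C hC).trans hUsub
      have hCIoo : C = Ioo (sInf C) (sSup C) :=
        open_conn_eq_Ioo (hCopen C hC) (hCconn C hC) ⟨z, hz⟩ hCsub'
      set c := sInf C
      set d := sSup C
      have hbdd_b : BddBelow C := (bddBelow_Ioo (a := b) (b := a)).mono hCsub'
      have hbdd_a : BddAbove C := (bddAbove_Ioo (a := a) (b := b)).mono hCsub'
      have hcd : c ≤ d := (csInf_le hbdd_b hz).trans (le_csSup hbdd_a hz)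
      have hac : a ≤ c := le_csInf ⟨z, hz⟩ fun w hw => (hCsub' hw).1.le
      have hdb : d ≤ b := csSup_le ⟨z, hz⟩ fun w hw => (hCsub' hw).2.le
      have hcont : ContinuousOn F (Icc c d) := hFc.mono (Icc_subset_Icc hac hdb)
      have hKcpt : IsCompact (F '' Icc c d) := isCompact_Icc.image_of_continuousOn hcont
      have hKne : (F '' Icc c d).Nonempty := (nonempty_Icc.2 hcd).image F
      obtain ⟨y, hyIcc, hy⟩ := hKcpt.sSup_mem hKne
      obtain ⟨x, hxIcc, hx⟩ := hKcpt.sInf_mem hKne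
      refine ⟨min x y, max x y, ?_, min_le_max, ?_, ?_, ?_, ?_⟩
      · exact le_min (hac.trans hxIcc.1) (hac.trans hyIcc.1)
      · exact max_le (hxIcc.2.trans hdb) (hyIcc.2.trans hdb)
      · rw [hCIoo]
        exact Ioo_subset_Ioo (le_min hxIcc.1 hyIcc.1) (max_le hxIcc.2 hyIcc.2)
      · have : max x y - min x y ≤ d - c := by
          have h1 := le_min hxIcc.1 hyIcc.1
          have h2 := max_le hxIcc.2 hyIcc.2
          linarith
        refine this.trans ?_
        rw [hCIoo, Real.volume_Ioo, ENNReal.toReal_ofReal (by linarith)]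
      · have himg : volume (F '' C) ≤ volume (F '' Icc c d) := by
          refine measure_mono (image_mono ?_)
          rw [hCIoo]; exact Ioo_subset_Icc_self
        refine himg.trans ?_
        rw [hcont.image_Icc hcd, Real.volume_Icc, ← hy, ← hx]
        have habs : F y - F x ≤ |F (max x y) - F (min x y)| := by
          have hFx_le : F x ≤ F y := by
            rw [hx, hy]; exact csInf_le_csSup hKne hKcpt.bddBelow hKcpt.bddAbove
          rcases le_total x y with hxy | hxy
          · rw [min_eq_left hxy, max_eq_right hxy]
            exact le_abs_self _
          · rw [min_eq_right hxy, max_eq_left hxy, abs_sub_comm]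
            exact le_abs_self _
        exact ENNReal.ofReal_le_ofReal habs
    -- finite subfamilies
    have main : ∀ 𝒮 : Finset (Set ℝ), ↑𝒮 ⊆ 𝒞 →
        (∑ C ∈ 𝒮, volume (F '' C)) ≤ ENNReal.ofReal ε := by
      intro 𝒮 h𝒮
      set n := 𝒮.card
      set e : Fin n ≃ {x // x ∈ 𝒮} := 𝒮.equivFin.symm with he
      have hmem : ∀ i : Fin n, ((e i : Set ℝ)) ∈ 𝒞 := fun i => h𝒮 (e i).2
      choose m M h1 h2 h3 h4 h5 h6 using fun i : Fin n => hdata _ (hmem i)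
      have hCne' : ∀ i j : Fin n, i ≠ j → Disjoint ((e i : Set ℝ)) ((e j : Set ℝ)) := by
        intro i j hij
        refine hCdisj _ (hmem i) _ (hmem j) ?_
        intro hEq
        exact hij (e.injective (Subtype.coe_injective hEq))
      have hpair : Pairwise fun i j => Disjoint (Ioo (m i) (M i)) (Ioo (m j) (M j)) :=
        fun i j hij => (hCne' i j hij).mono (h4 i) (h4 j)
      have hvolsum : (∑ i, volume ((e i : Set ℝ))) ≤ ENNReal.ofReal δ := by
        have hdisjf : Set.PairwiseDisjoint
            ((Finset.univ : Finset (Fin n)) : Set (Fin n)) (fun i => (e i : Set ℝ)) :=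
          fun i _ j _ hij => hCne' i j hij
        rw [← measure_biUnion_finset hdisjf fun i _ => (hCopen _ (hmem i)).measurableSet]
        refine le_trans (measure_mono ?_) hUμ
        exact iUnion₂_subset fun i _ => hCsub _ (hmem i)
      have hsumlen : (∑ i, (M i - m i)) ≤ δ := by
        have s1 : (∑ i, (M i - m i)) ≤ ∑ i, (volume ((e i : Set ℝ))).toReal :=
          Finset.sum_le_sum fun i _ => h5 i
        refine s1.trans ?_
        have hfin : ∀ i ∈ (Finset.univ : Finset (Fin n)),
            volume ((e i : Set ℝ)) ≠ ⊤ := fun i _ =>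
          ne_top_of_le_ne_top ENNReal.ofReal_ne_top
            (le_trans (le_trans (measure_mono (hCsub _ (hmem i))) hUμ) le_rfl)
        rw [← ENNReal.toReal_sum hfin]
        refine le_trans (ENNReal.toReal_mono ENNReal.ofReal_ne_top hvolsum) ?_
        rw [ENNReal.toReal_ofReal hδ.le]
      have hACres := HAC n m M (fun i => ⟨h1 i, (h2 i), h3 i⟩) hpair hsumlen
      calc (∑ C ∈ 𝒮, volume (F '' C))
          = ∑ i, volume (F '' ((e i : Set ℝ))) := by
            rw [← Finset.sum_coe_sort 𝒮 (fun C => volume (F '' C))]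
            exact (Fintype.sum_equiv e _ _ fun i => rfl).symm
        _ ≤ ∑ i, ENNReal.ofReal |F (M i) - F (m i)| := Finset.sum_le_sum fun i _ => h6 i
        _ = ENNReal.ofReal (∑ i, |F (M i) - F (m i)|) := by
            rw [ENNReal.ofReal_sum_of_nonneg fun i _ => abs_nonneg _]
        _ ≤ ENNReal.ofReal ε := ENNReal.ofReal_le_ofReal hACres
    -- put together
    calc volume (F '' N) ≤ volume (⋃ C ∈ 𝒞, F '' C) := by
          refine measure_mono fun w hw => ?_
          obtain ⟨x, hxN, rfl⟩ := hw
          exact mem_biUnion (mem_image_of_mem _ (hNU hxN))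
            (mem_image_of_mem F (mem_connectedComponentIn (hNU hxN)))
      _ ≤ ∑' (C : 𝒞), volume (F '' (C : Set ℝ)) := measure_biUnion_le _ hcount _
      _ ≤ ENNReal.ofReal ε := by
          rw [ENNReal.tsum_eq_iSup_sum]
          refine iSup_le fun s => ?_
          have : (∑ i ∈ s, volume (F '' (i : Set ℝ)))
              = ∑ C ∈ s.image Subtype.val, volume (F '' C) := by
            rw [Finset.sum_image (fun x _ y _ h => Subtype.coe_injective h)]
          rw [this]
          refine main _ ?_
          intro C hC
          simp only [Finset.coe_image, Set.mem_image] at hC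
          obtain ⟨⟨C', hC'⟩, _, rfl⟩ := hC
          exact hC'
  refine le_antisymm ?_ (zero_le)
  refine ENNReal.le_of_forall_pos_le_add fun ε' hε' _ => ?_
  calc volume (F '' N) ≤ ENNReal.ofReal (ε' : ℝ) := key _ (by exact_mod_cast hε')
    _ = (ε' : ℝ≥0∞) := ENNReal.ofReal_coe_nnreal
    _ ≤ 0 + ε' := by rw [zero_add]

lemma ftc_ac {F h : ℝ → ℝ} {a b : ℝ} (hab : a ≤ b)
    (hF : AbsolutelyContinuousOnReal F a b)
    (hd : ∀ᵐ t ∂(volume.restrict (Ioo a b)), HasDerivAt F (h t) t)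
    (hh : IntegrableOn h (Ioo a b) volume) :
    F b - F a = ∫ t in Ioo a b, h t := by
  classical
  set h' : ℝ → ℝ := (Ioo a b).indicator h with hh'def
  have hh' : Integrable h' (volume : Measure ℝ) :=
    (integrable_indicator_iff measurableSet_Ioo).2 hh
  set G : ℝ → ℝ := fun t => ∫ s in a..t, h' s with hGdef
  have hGac : ∀ a' b' : ℝ, AbsolutelyContinuousOnReal G a' b' := fun a' b' =>
    primitive_ac hh' a a' b'
  have hGd : ∀ᵐ x ∂(volume : Measure ℝ), HasDerivAt G (h' x) x := ae_hasDerivAt_primitive hh' a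
  have hGd' : ∀ᵐ t ∂(volume.restrict (Ioo a b)), HasDerivAt G (h t) t := by
    filter_upwards [ae_restrict_of_ae hGd, ae_restrict_mem measurableSet_Ioo] with t h1 h2
    rwa [hh'def, indicator_of_mem h2] at h1
  set D : ℝ → ℝ := fun t => F t - G t with hDdef
  have hDac : AbsolutelyContinuousOnReal D a b := ACAux.sub hF (hGac a b)
  have hDd : ∀ᵐ t ∂(volume.restrict (Ioo a b)), HasDerivAt D 0 t := by
    filter_upwards [hd, hGd'] with t h1 h2
    have := h1.sub h2
    simp only [sub_self] at this
    exact this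
  -- extract a measurable set where the derivative is 0
  obtain ⟨s, hsmeas, hsub, hsnull, hsD⟩ : ∃ s : Set ℝ, MeasurableSet s ∧ s ⊆ Ioo a b ∧
      volume (Ioo a b \ s) = 0 ∧ ∀ x ∈ s, HasDerivAt D 0 x := by
    have hbad : volume ({t | ¬ HasDerivAt D 0 t} ∩ Ioo a b) = 0 := by
      have h0 : volume.restrict (Ioo a b) {t | ¬ HasDerivAt D 0 t} = 0 := hDd
      rwa [Measure.restrict_apply' measurableSet_Ioo] at h0
    set Nbad := {t | ¬ HasDerivAt D 0 t} ∩ Ioo a b with hNbad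
    refine ⟨Ioo a b \ toMeasurable volume Nbad,
      measurableSet_Ioo.diff (measurableSet_toMeasurable _ _), diff_subset, ?_, ?_⟩
    · have hss : Ioo a b \ (Ioo a b \ toMeasurable volume Nbad) ⊆ toMeasurable volume Nbad := by
        intro x hx
        by_contra hxx
        exact hx.2 ⟨hx.1, hxx⟩
      refine measure_mono_null hss ?_
      rw [measure_toMeasurable]
      exact hbad
    · intro x hx
      by_contra hxx
      exact hx.2 (subset_toMeasurable _ _ ⟨hxx, hx.1⟩)
  have h1 : volume (D '' s) = 0 := image_null_of_deriv_zero hsmeas hsD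
  have h2 : volume (D '' (Ioo a b \ s)) = 0 :=
    luzinN hDac (diff_subset) hsnull
  have h3 : volume (D '' Icc a b) = 0 := by
    have hsplit : Icc a b ⊆ s ∪ (Ioo a b \ s) ∪ {a, b} := by
      intro x hx
      rcases eq_or_ne x a with rfl | hxa
      · exact Or.inr (Or.inl rfl)
      rcases eq_or_ne x b with rfl | hxb
      · exact Or.inr (Or.inr rfl)
      have hxIoo : x ∈ Ioo a b := ⟨hx.1.lt_of_ne (Ne.symm hxa), hx.2.lt_of_ne hxb⟩
      by_cases hxs : x ∈ s
      · exact Or.inl (Or.inl hxs)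
      · exact Or.inl (Or.inr ⟨hxIoo, hxs⟩)
    refine measure_mono_null (image_mono hsplit) ?_
    rw [image_union, image_union]
    refine measure_union_null (measure_union_null h1 h2) ?_
    refine measure_mono_null (image_subset_iff.2 ?_) (?_ : volume {D a, D b} = 0)
    · intro x hx
      rcases hx with rfl | rfl
      · exact Or.inl rfl
      · exact Or.inr rfl
    · exact measure_union_null (measure_singleton _) (measure_singleton _)
  have hDc : ContinuousOn D (Icc a b) := ACAux.continuousOn hDac
  have hconst : D b = D a := by
    by_contra hne
    have hsub2 : uIcc (D a) (D b) ⊆ D '' Icc a b := by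
      have := intermediate_value_uIcc (f := D) (a := a) (b := b)
        (hDc.mono (by rw [uIcc_of_le hab]))
      refine this.trans (image_mono ?_)
      rw [uIcc_of_le hab]
    have : volume (uIcc (D a) (D b)) = 0 := measure_mono_null hsub2 h3
    rw [uIcc, Real.volume_Icc] at this
    have hlt : (0:ℝ) < (D a ⊔ D b) - (D a ⊓ D b) := by
      rcases Ne.lt_or_gt hne with hlt | hlt
      · rw [sup_eq_left.2 hlt.le, inf_eq_right.2 hlt.le]; linarith
      · rw [sup_eq_right.2 hlt.le, inf_eq_left.2 hlt.le]; linarith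
    rw [ENNReal.ofReal_eq_zero] at this
    linarith
  have hGb : G b - G a = ∫ t in Ioo a b, h t := by
    have hGa : G a = 0 := intervalIntegral.integral_same
    have : G b = ∫ t in Ioo a b, h t := by
      rw [hGdef]
      simp only []
      rw [intervalIntegral.integral_of_le hab, hh'def,
        MeasureTheory.setIntegral_indicator measurableSet_Ioo,
        inter_eq_self_of_subset_right Ioo_subset_Ioc_self]
    rw [this, hGa, sub_zero]
  have : F b - G b = F a - G a := hconst
  linarith [hGb, this]

lemma scalar_ibp {T : ℝ} {ψ g : ℝ → ℝ}
    (hACψ : ∀ a b : ℝ, a ∈ Ioo 0 T → b ∈ Ioo 0 T → a ≤ b → AbsolutelyContinuousOnReal ψ a b)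
    (hd : ∀ᵐ t ∂(volume.restrict (Ioo 0 T)), HasDerivAt ψ (g t) t)
    (hg : IntegrableOn g (Ioo 0 T) volume)
    {φ : ℝ → ℝ} (hφ : ContDiff ℝ (⊤ : ℕ∞) φ) (hsupp : HasCompactSupport φ)
    (hsub : tsupport φ ⊆ Ioo 0 T) :
    ∫ t in Ioo 0 T, (deriv φ t * ψ t + φ t * g t) = 0 := by
  rcases (tsupport φ).eq_empty_or_nonempty with hK | hK
  · have hφ0 : ∀ x, φ x = 0 := fun x =>
      image_eq_zero_of_notMem_tsupport (by rw [hK]; exact notMem_empty x)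
    have hdφ0 : ∀ x, deriv φ x = 0 := fun x => by
      by_contra hne
      have : x ∈ tsupport φ := support_deriv_subset (by exact hne)
      rw [hK] at this
      exact notMem_empty x this
    have : ∀ t, deriv φ t * ψ t + φ t * g t = 0 := fun t => by
      rw [hφ0, hdφ0]; ring
    simp only [this, MeasureTheory.integral_zero]
  · set K := tsupport φ with hKdef
    set α₀ := sInf K with hα₀
    set β₀ := sSup K with hβ₀
    have hα₀K : α₀ ∈ K := hsupp.sInf_mem hK
    have hβ₀K : β₀ ∈ K := hsupp.sSup_mem hK
    have hα₀Ioo : α₀ ∈ Ioo 0 T := hsub hα₀K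
    have hβ₀Ioo : β₀ ∈ Ioo 0 T := hsub hβ₀K
    have hα₀β₀ : α₀ ≤ β₀ := csInf_le_csSup hK hsupp.bddBelow hsupp.bddAbove
    set α := α₀ / 2 with hα
    set β := (β₀ + T) / 2 with hβ
    have hαIoo : α ∈ Ioo 0 T := ⟨by simp [hα]; linarith [hα₀Ioo.1], by
      simp only [hα]; linarith [hα₀Ioo.1, hα₀Ioo.2]⟩
    have hβIoo : β ∈ Ioo 0 T := ⟨by simp only [hβ]; linarith [hβ₀Ioo.1, hβ₀Ioo.2], by
      simp only [hβ]; linarith [hβ₀Ioo.2]⟩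
    have hαβ : α ≤ β := by simp only [hα, hβ]; linarith [hα₀Ioo.1, hβ₀Ioo.2]
    have hKsub : K ⊆ Ioo α β := by
      intro x hx
      constructor
      · have : α₀ ≤ x := csInf_le hsupp.bddBelow hx
        simp only [hα]; linarith [hα₀Ioo.1]
      · have : x ≤ β₀ := le_csSup hsupp.bddAbove hx
        simp only [hβ]; linarith [hβ₀Ioo.2]
    have hIooSub : Ioo α β ⊆ Ioo 0 T := Ioo_subset_Ioo hαIoo.1.le hβIoo.2.le
    -- bounds for φ and deriv φ
    obtain ⟨L, hL⟩ := (hφ.continuous_deriv (by simp)).bounded_above_of_compact_support hsupp.deriv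
    obtain ⟨M, hM⟩ := hφ.continuous.bounded_above_of_compact_support hsupp
    have hLip' : LipschitzWith (Real.toNNReal L) φ :=
      lipschitzWith_of_nnnorm_deriv_le (hφ.differentiable (by simp)) fun x => by
        rw [← NNReal.coe_le_coe, coe_nnnorm, Real.coe_toNNReal']
        exact le_max_of_le_left (hL x)
    have hLip : ∀ x y, |φ x - φ y| ≤ max L 0 * |x - y| := fun x y => by
      have := hLip'.dist_le_mul x y
      rwa [Real.dist_eq, Real.dist_eq, Real.coe_toNNReal'] at this
    have hMabs : ∀ x, |φ x| ≤ M := fun x => by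
      have := hM x; rwa [Real.norm_eq_abs] at this
    -- AC of the product
    have hψac : AbsolutelyContinuousOnReal ψ α β := hACψ α β hαIoo hβIoo hαβ
    have hFac : AbsolutelyContinuousOnReal (fun t => φ t * ψ t) α β :=
      ACAux.mul hψac M (max L 0) hMabs hLip
    -- a.e. derivative of the product
    have hd' : ∀ᵐ t ∂(volume.restrict (Ioo α β)), HasDerivAt ψ (g t) t :=
      ae_restrict_of_ae_restrict_of_subset hIooSub hd
    have hFd : ∀ᵐ t ∂(volume.restrict (Ioo α β)),
        HasDerivAt (fun τ => φ τ * ψ τ) (deriv φ t * ψ t + φ t * g t) t := by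
      filter_upwards [hd'] with t ht
      exact (((hφ.differentiable (by simp)) t).hasDerivAt).mul ht
    -- integrability on Ioo α β
    have hint1 : IntegrableOn (fun t => deriv φ t * ψ t) (Ioo α β) volume := by
      have hcont : ContinuousOn (fun t => deriv φ t * ψ t) (Icc α β) :=
        ((hφ.continuous_deriv (by simp)).continuousOn).mul (ACAux.continuousOn hψac)
      exact (hcont.integrableOn_Icc).mono_set Ioo_subset_Icc_self
    have hint2 : IntegrableOn (fun t => φ t * g t) (Ioo α β) volume := by
      have hg' : IntegrableOn g (Ioo α β) volume := hg.mono_set hIooSub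
      have hφtop : MemLp φ ⊤ (volume.restrict (Ioo α β)) :=
        memLp_top_of_bound hφ.continuous.aestronglyMeasurable M (ae_of_all _ hM)
      have := hg'.smul_of_top_right hφtop
      exact this
    have hint : IntegrableOn (fun t => deriv φ t * ψ t + φ t * g t) (Ioo α β) volume :=
      hint1.add hint2
    -- FTC
    have hftc := ftc_ac hαβ hFac hFd hint
    have hφα : φ α = 0 := image_eq_zero_of_notMem_tsupport fun hx => (hKsub hx).1.ne rfl
    have hφβ : φ β = 0 := image_eq_zero_of_notMem_tsupport fun hx => (hKsub hx).2.ne' rfl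
    rw [hφα, hφβ, zero_mul, zero_mul, sub_zero] at hftc
    -- extend the integral to (0, T)
    have hvanish : ∀ x ∈ Ioo 0 T \ Ioo α β, deriv φ x * ψ x + φ x * g x = 0 := by
      intro x hx
      have hxK : x ∉ K := fun hxK => hx.2 (hKsub hxK)
      have h1 : φ x = 0 := image_eq_zero_of_notMem_tsupport hxK
      have h2 : deriv φ x = 0 := by
        by_contra hne
        exact hxK (support_deriv_subset (by exact hne))
      rw [h1, h2]; ring
    rw [setIntegral_eq_of_subset_of_forall_diff_eq_zero measurableSet_Ioo hIooSub hvanish]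
    rw [← hftc]

/-- Let `X` be a Banach space with separable dual, `1 ≤ p ≤ ∞`, and
`u, v ∈ L^p((0,T); X)`. Suppose there is a countable dense set `E' ⊆ X'` such that for
every `x' ∈ E'` the scalar function `ψ t = ⟨x', u t⟩` is locally absolutely continuous on
`(0,T)` with `ψ' t = ⟨x', v t⟩` for a.e. `t`. Then `v` is the weak derivative of `u`:
`∫₀ᵀ φ' • u = −∫₀ᵀ φ • v` for all smooth compactly supported test functions `φ` on `(0,T)`. -/
theorem stmt17 {X : Type*} [NormedAddCommGroup X] [NormedSpace ℝ X] [CompleteSpace X]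
    [TopologicalSpace.SeparableSpace (StrongDual ℝ X)]
    (T : ℝ) (hT : 0 < T) (p : ℝ≥0∞) (hp : 1 ≤ p)
    (u v : ℝ → X)
    (hu : MemLp u p (volume.restrict (Set.Ioo 0 T)))
    (hv : MemLp v p (volume.restrict (Set.Ioo 0 T)))
    (E' : Set (StrongDual ℝ X)) (hE'count : E'.Countable) (hE'dense : Dense E')
    (hAC : ∀ x' ∈ E', ∀ a b : ℝ, a ∈ Set.Ioo 0 T → b ∈ Set.Ioo 0 T → a ≤ b →
      AbsolutelyContinuousOnReal (fun t => x' (u t)) a b)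
    (hderiv : ∀ x' ∈ E', ∀ᵐ t ∂(volume.restrict (Set.Ioo 0 T)),
      HasDerivAt (fun τ => x' (u τ)) (x' (v t)) t) :
    ∀ φ : ℝ → ℝ, ContDiff ℝ (⊤ : ℕ∞) φ → HasCompactSupport φ → tsupport φ ⊆ Set.Ioo 0 T →
      ∫ t in Set.Ioo 0 T, deriv φ t • u t = -∫ t in Set.Ioo 0 T, φ t • v t := by
  intro φ hφ hsupp hsub
  haveI hfin : IsFiniteMeasure (volume.restrict (Set.Ioo 0 T)) := by
    constructor
    rw [Measure.restrict_apply_univ, Real.volume_Ioo]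
    exact ENNReal.ofReal_lt_top
  have hu1 : Integrable u (volume.restrict (Set.Ioo 0 T)) :=
    memLp_one_iff_integrable.1 (hu.mono_exponent hp)
  have hv1 : Integrable v (volume.restrict (Set.Ioo 0 T)) :=
    memLp_one_iff_integrable.1 (hv.mono_exponent hp)
  obtain ⟨M₁, hM₁⟩ := (hφ.continuous_deriv (by simp)).bounded_above_of_compact_support hsupp.deriv
  obtain ⟨M₂, hM₂⟩ := hφ.continuous.bounded_above_of_compact_support hsupp
  have hint1 : Integrable (fun t => deriv φ t • u t) (volume.restrict (Set.Ioo 0 T)) := by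
    have := hu1.smul_of_top_right (memLp_top_of_bound
      (hφ.continuous_deriv (by simp)).aestronglyMeasurable M₁ (ae_of_all _ hM₁))
    exact this
  have hint2 : Integrable (fun t => φ t • v t) (volume.restrict (Set.Ioo 0 T)) := by
    have := hv1.smul_of_top_right (memLp_top_of_bound
      hφ.continuous.aestronglyMeasurable M₂ (ae_of_all _ hM₂))
    exact this
  set A := ∫ t in Set.Ioo 0 T, deriv φ t • u t with hA
  set B := ∫ t in Set.Ioo 0 T, φ t • v t with hB
  have key : ∀ x' ∈ E', x' (A + B) = 0 := by
    intro x' hx'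
    have hgint : IntegrableOn (fun t => x' (v t)) (Set.Ioo 0 T) volume :=
      ContinuousLinearMap.integrable_comp x' hv1
    have hscalar := scalar_ibp (hAC x' hx') (hderiv x' hx') hgint hφ hsupp hsub
    have hc1 : ∫ t in Set.Ioo 0 T, x' (deriv φ t • u t) = x' A :=
      ContinuousLinearMap.integral_comp_comm x' hint1
    have hc2 : ∫ t in Set.Ioo 0 T, x' (φ t • v t) = x' B :=
      ContinuousLinearMap.integral_comp_comm x' hint2
    have hi1 : Integrable (fun t => x' (deriv φ t • u t)) (volume.restrict (Set.Ioo 0 T)) :=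
      ContinuousLinearMap.integrable_comp x' hint1
    have hi2 : Integrable (fun t => x' (φ t • v t)) (volume.restrict (Set.Ioo 0 T)) :=
      ContinuousLinearMap.integrable_comp x' hint2
    calc x' (A + B) = x' A + x' B := map_add x' A B
      _ = (∫ t in Set.Ioo 0 T, x' (deriv φ t • u t))
          + ∫ t in Set.Ioo 0 T, x' (φ t • v t) := by rw [hc1, hc2]
      _ = ∫ t in Set.Ioo 0 T, (x' (deriv φ t • u t) + x' (φ t • v t)) :=
          (integral_add hi1 hi2).symm
      _ = ∫ t in Set.Ioo 0 T, (deriv φ t * x' (u t) + φ t * x' (v t)) := by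
          congr 1
          funext t
          rw [_root_.map_smul, _root_.map_smul, smul_eq_mul, smul_eq_mul]
      _ = 0 := hscalar
  have hall : ∀ x' : StrongDual ℝ X, x' (A + B) = 0 := by
    have hcont : Continuous fun x' : StrongDual ℝ X => x' (A + B) :=
      (ContinuousLinearMap.apply ℝ ℝ (A + B)).continuous
    have := Continuous.ext_on hE'dense hcont continuous_const (fun x' hx' => key x' hx')
    exact fun x' => congrFun this x'
  have hzero : A + B = 0 := NormedSpace.eq_zero_of_forall_dual_eq_zero ℝ hall
  exact eq_neg_of_add_eq_zero_left hzero
end
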